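/- Let μ_1, …, μ_k be non-atomic Borel probability measures on [0,1) such that some Borel partition B_1,…,B_k of [0,1) satisfies μ_i(B_i) > 1/k for all i. Let D be a probability distribution on the countable set 𝒬 of partitions of [0,1) into finite unions of half-open rational-endpoint intervals, such that D assigns strictly positive probability to every element of 𝒬 (its support is all of 𝒬). Then the probability under D that the drawn partition (C_1,…,C_k) satisfies μ_i(C_i) > 1/k for every i is strictly positive. -/

import Mathlib

/-!
Rational half-lines `Iio q` generate the Borel σ-algebra, so the algebra of sets they generate is
measure-dense for the finite measure `ν = ∑ μ i`; cut down to `[0,1)`, its members are finite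
unions of rational intervals. Hence each `B j` has such an approximation `R j` with
`ν (B j ∆ R j)` as small as we like. Completing `(R j)` to a partition `C` of `[0,1)` by
disjointification moves only points at which some `B j` and `R j` disagree, because the same
completion leaves the partition `(B j)` unchanged. So `C ∈ 𝒬` is still super-fair, and `D` gives
it positive mass.
-/

open MeasureTheory
open scoped ENNReal

/-- `R` is a finite union of half-open intervals `[a, b) ⊆ [0,1)` with rational
endpoints (an element of the algebra `ℛ`). -/
def IsRatIcoUnion (R : Set ℝ) : Prop :=
  ∃ s : Finset (ℚ × ℚ), (∀ p ∈ s, 0 ≤ p.1 ∧ p.2 ≤ 1) ∧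
    R = ⋃ p ∈ s, Set.Ico (p.1 : ℝ) (p.2 : ℝ)

/-- `Q` is a member of `𝒬`: a partition of `[0,1)` into `k` pieces, each a finite
union of half-open intervals with rational endpoints. -/
def IsQPartition (k : ℕ) (Q : Fin k → Set ℝ) : Prop :=
  (∀ j, IsRatIcoUnion (Q j)) ∧
    (∀ j j', j ≠ j' → Disjoint (Q j) (Q j')) ∧
    (⋃ j, Q j) = Set.Ico (0 : ℝ) 1

open Set Function
open scoped symmDiff

section ToPartition

variable {α ι : Type*}

/-- The part of `I` that no `f j` covers is added to every member, so after `disjointed` it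
lands in the least index. -/
def toPartition [Preorder ι] [LocallyFiniteOrderBot ι] (I : Set α) (f : ι → Set α) :
    ι → Set α :=
  disjointed fun j ↦ f j ∪ (I \ ⋃ j, f j)

lemma mem_toPartition_iff_of_forall_mem_iff [Preorder ι] [LocallyFiniteOrderBot ι] {I : Set α}
    {f g : ι → Set α} {x : α} (h : ∀ j, x ∈ f j ↔ x ∈ g j) (i : ι) :
    x ∈ toPartition I f i ↔ x ∈ toPartition I g i := by
  simp only [toPartition, disjointed_eq_inter_compl, mem_inter_iff, mem_iInter, mem_compl_iff,
    mem_union, mem_sdiff, mem_iUnion, h]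

lemma toPartition_symmDiff_subset [Preorder ι] [LocallyFiniteOrderBot ι] (I : Set α)
    (f g : ι → Set α) (i : ι) :
    toPartition I f i ∆ toPartition I g i ⊆ ⋃ j, f j ∆ g j := by
  intro x hx
  by_contra hfg
  have h : ∀ j, x ∈ f j ↔ x ∈ g j := fun j ↦ by
    by_contra hj
    exact hfg (mem_iUnion.2 ⟨j, by rw [mem_symmDiff]; tauto⟩)
  rw [mem_symmDiff, mem_toPartition_iff_of_forall_mem_iff h] at hx
  tauto

lemma toPartition_eq_self [Preorder ι] [LocallyFiniteOrderBot ι] {I : Set α} {f : ι → Set α}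
    (hdisj : Pairwise (Disjoint on f)) (hcover : ⋃ j, f j = I) : toPartition I f = f := by
  ext1 i
  simp only [toPartition, hcover, sdiff_self, union_empty]
  exact disjointed_eq_self fun j hj ↦ hdisj hj.ne

lemma iUnion_toPartition [PartialOrder ι] [LocallyFiniteOrderBot ι] [Nonempty ι]
    {I : Set α} {f : ι → Set α} (hf : ∀ j, f j ⊆ I) :
    ⋃ i, toPartition I f i = I := by
  rw [toPartition, iUnion_disjointed, ← iUnion_union, union_sdiff_self,
    union_eq_right.2 (iUnion_subset hf)]

lemma pairwise_disjoint_toPartition [LinearOrder ι] [LocallyFiniteOrderBot ι]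
    (I : Set α) (f : ι → Set α) : Pairwise (Disjoint on toPartition I f) :=
  disjoint_disjointed _

end ToPartition

lemma isRatIcoUnion_empty : IsRatIcoUnion ∅ := ⟨∅, by simp, by simp⟩

lemma isRatIcoUnion_Ico {a b : ℚ} (ha : 0 ≤ a) (hb : b ≤ 1) :
    IsRatIcoUnion (Ico (a : ℝ) b) :=
  ⟨{(a, b)}, by simp [ha, hb], by simp⟩

lemma isRatIcoUnion_Ico_zero_one : IsRatIcoUnion (Ico (0 : ℝ) 1) := by
  simpa using isRatIcoUnion_Ico (a := 0) (b := 1) le_rfl le_rfl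

namespace IsRatIcoUnion

lemma subset_Ico {R : Set ℝ} (hR : IsRatIcoUnion R) : R ⊆ Ico 0 1 := by
  obtain ⟨s, hs, rfl⟩ := hR
  refine iUnion₂_subset fun p hp ↦ Ico_subset_Ico ?_ ?_
  · exact_mod_cast (hs p hp).1
  · exact_mod_cast (hs p hp).2

lemma union {R R' : Set ℝ} (hR : IsRatIcoUnion R) (hR' : IsRatIcoUnion R') :
    IsRatIcoUnion (R ∪ R') := by
  classical
  obtain ⟨s, hs, rfl⟩ := hR
  obtain ⟨t, ht, rfl⟩ := hR'
  refine ⟨s ∪ t, fun p hp ↦ ?_, (Finset.set_biUnion_union s t _).symm⟩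
  rcases Finset.mem_union.1 hp with hp | hp
  exacts [hs p hp, ht p hp]

lemma biUnion {ι : Type*} (s : Finset ι) {f : ι → Set ℝ}
    (hf : ∀ i ∈ s, IsRatIcoUnion (f i)) : IsRatIcoUnion (⋃ i ∈ s, f i) := by
  classical
  induction s using Finset.induction_on with
  | empty => simpa using isRatIcoUnion_empty
  | insert a s _ ih =>
    rw [Finset.set_biUnion_insert]
    exact (hf a (s.mem_insert_self a)).union (ih fun i hi ↦ hf i (Finset.mem_insert_of_mem hi))

lemma iUnion {ι : Type*} [Fintype ι] {f : ι → Set ℝ} (hf : ∀ i, IsRatIcoUnion (f i)) :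
    IsRatIcoUnion (⋃ i, f i) := by
  simpa using biUnion Finset.univ fun i _ ↦ hf i

lemma inter {R R' : Set ℝ} (hR : IsRatIcoUnion R) (hR' : IsRatIcoUnion R') :
    IsRatIcoUnion (R ∩ R') := by
  obtain ⟨s, hs, rfl⟩ := hR
  obtain ⟨t, ht, rfl⟩ := hR'
  have h : (⋃ p ∈ s, Ico (p.1 : ℝ) p.2) ∩ ⋃ q ∈ t, Ico (q.1 : ℝ) q.2 =
      ⋃ pq ∈ s ×ˢ t, Ico ((max pq.1.1 pq.2.1 : ℚ) : ℝ) (min pq.1.2 pq.2.2 : ℚ) := by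
    simp only [iUnion₂_inter, inter_iUnion₂, Ico_inter_Ico, Finset.mem_product, iUnion_and,
      Rat.cast_max, Rat.cast_min]
    ext x
    simp only [mem_iUnion, exists_prop, Prod.exists]
    grind
  rw [h]
  refine biUnion _ fun pq hpq ↦ ?_
  obtain ⟨hp0, hp1⟩ := hs _ (Finset.mem_product.1 hpq).1
  exact isRatIcoUnion_Ico (le_max_of_le_left hp0) (min_le_of_left_le hp1)

lemma _root_.isRatIcoUnion_Ico_zero_one_sdiff_Ico (a b : ℚ) :
    IsRatIcoUnion (Ico 0 1 \ Ico (a : ℝ) b) := by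
  have h : Ico (0 : ℝ) 1 \ Ico (a : ℝ) b =
      Ico ((0 : ℚ) : ℝ) (min a 1 : ℚ) ∪ Ico ((max b 0 : ℚ) : ℝ) (1 : ℚ) := by
    ext x
    simp only [mem_sdiff, mem_union, mem_Ico, Rat.cast_min, Rat.cast_max, Rat.cast_zero,
      Rat.cast_one, lt_min_iff, max_le_iff]
    grind
  rw [h]
  exact (isRatIcoUnion_Ico le_rfl (min_le_right _ _)).union
    (isRatIcoUnion_Ico (le_max_right _ _) le_rfl)

lemma Ico_zero_one_sdiff {R : Set ℝ} (hR : IsRatIcoUnion R) :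
    IsRatIcoUnion (Ico 0 1 \ R) := by
  classical
  obtain ⟨s, -, rfl⟩ := hR
  induction s using Finset.induction_on with
  | empty => simpa using isRatIcoUnion_Ico_zero_one
  | insert p s _ ih =>
    rw [Finset.set_biUnion_insert, ← sdiff_inter_sdiff]
    exact (isRatIcoUnion_Ico_zero_one_sdiff_Ico p.1 p.2).inter ih

lemma sdiff {R R' : Set ℝ} (hR : IsRatIcoUnion R) (hR' : IsRatIcoUnion R') :
    IsRatIcoUnion (R \ R') := by
  rw [← inter_eq_left.2 hR.subset_Ico, inter_sdiff_assoc]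
  exact hR.inter hR'.Ico_zero_one_sdiff

end IsRatIcoUnion

lemma isRatIcoUnion_toPartition {ι : Type*} [Fintype ι] [Preorder ι] [LocallyFiniteOrderBot ι]
    {R : ι → Set ℝ} (hR : ∀ j, IsRatIcoUnion (R j)) (i : ι) :
    IsRatIcoUnion (toPartition (Ico 0 1) R i) := by
  have hfill : ∀ j, IsRatIcoUnion (R j ∪ (Ico 0 1 \ ⋃ j, R j)) :=
    fun j ↦ (hR j).union (IsRatIcoUnion.iUnion hR).Ico_zero_one_sdiff
  exact disjointedRec (fun _ j ht ↦ ht.sdiff (hfill j)) (hfill i)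

lemma isQPartition_toPartition {k : ℕ} [NeZero k] {R : Fin k → Set ℝ}
    (hR : ∀ j, IsRatIcoUnion (R j)) : IsQPartition k (toPartition (Ico 0 1) R) :=
  ⟨isRatIcoUnion_toPartition hR, pairwise_disjoint_toPartition _ R,
    iUnion_toPartition fun j ↦ (hR j).subset_Ico⟩

lemma isSetAlgebra_isRatIcoUnion_inter_Ico :
    IsSetAlgebra {t : Set ℝ | IsRatIcoUnion (t ∩ Ico 0 1)} where
  empty_mem := by simpa using isRatIcoUnion_empty
  compl_mem t ht := by
    simpa only [mem_ofPred_eq, ← sdiff_eq_compl_inter, sdiff_inter_self_eq_sdiff] using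
      ht.Ico_zero_one_sdiff
  union_mem s t hs ht := by
    simpa only [mem_ofPred_eq, union_inter_distrib_right] using hs.union ht

lemma Iio_mem_isRatIcoUnion_inter_Ico (q : ℚ) :
    Iio (q : ℝ) ∈ {t : Set ℝ | IsRatIcoUnion (t ∩ Ico 0 1)} := by
  have h : Iio (q : ℝ) ∩ Ico 0 1 = Ico ((0 : ℚ) : ℝ) (min q 1 : ℚ) := by
    ext x
    simp only [mem_inter_iff, mem_Iio, mem_Ico, Rat.cast_zero, Rat.cast_min, Rat.cast_one,
      lt_min_iff]
    tauto
  simpa only [mem_ofPred_eq, h] using isRatIcoUnion_Ico le_rfl (min_le_right q 1)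

lemma exists_isRatIcoUnion_measure_symmDiff_lt (ν : Measure ℝ) [IsFiniteMeasure ν] {S : Set ℝ}
    (hS : MeasurableSet S) (hSI : S ⊆ Ico 0 1) {ε : ℝ} (hε : 0 < ε) :
    ∃ R, IsRatIcoUnion R ∧ ν (S ∆ R) < ENNReal.ofReal ε := by
  have hgen : (inferInstance : MeasurableSpace ℝ) =
      .generateFrom (generateSetAlgebra (⋃ q : ℚ, {Iio (q : ℝ)})) := by
    rw [generateFrom_generateSetAlgebra_eq, ← Real.borel_eq_generateFrom_Iio_rat,
      BorelSpace.measurable_eq (α := ℝ)]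
  obtain ⟨t, ht, hSt⟩ := (Measure.MeasureDense.of_generateFrom_isSetAlgebra_finite ν
    isSetAlgebra_generateSetAlgebra hgen).approx S hS (measure_ne_top ν S) ε hε
  have htI : IsRatIcoUnion (t ∩ Ico 0 1) := by
    refine isSetAlgebra_isRatIcoUnion_inter_Ico.generateSetAlgebra_subset ?_ ht
    simpa only [iUnion_subset_iff, singleton_subset_iff] using Iio_mem_isRatIcoUnion_inter_Ico
  refine ⟨_, htI, (measure_mono fun x hx ↦ ?_).trans_lt hSt⟩
  have hxI := @hSI x
  simp only [mem_symmDiff, mem_inter_iff] at hx ⊢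
  tauto

lemma exists_isQPartition_measure_symmDiff_lt {k : ℕ} (ν : Measure ℝ) [IsFiniteMeasure ν]
    {B : Fin k → Set ℝ} (hmeas : ∀ j, MeasurableSet (B j)) (hdisj : Pairwise (Disjoint on B))
    (hcover : ⋃ j, B j = Ico 0 1) {ε : ℝ≥0∞} (hε : ε ≠ 0) :
    ∃ C, IsQPartition k C ∧ ∀ i, ν (B i ∆ C i) < ε := by
  have : NeZero k := by
    have h0 : (0 : ℝ) ∈ ⋃ j, B j := hcover ▸ left_mem_Ico.2 zero_lt_one
    exact NeZero.of_pos (mem_iUnion.1 h0).choose.pos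
  obtain ⟨δ, hδ, hδε⟩ := ENNReal.exists_pos_sum_of_countable hε (Fin k)
  choose R hR hBR using fun j ↦ exists_isRatIcoUnion_measure_symmDiff_lt ν (hmeas j)
    (hcover ▸ subset_iUnion B j) (NNReal.coe_pos.2 (hδ j))
  refine ⟨toPartition (Ico 0 1) R, isQPartition_toPartition hR, fun i ↦ ?_⟩
  have hBi := toPartition_symmDiff_subset (Ico 0 1) B R i
  rw [toPartition_eq_self hdisj hcover] at hBi
  calc ν (B i ∆ toPartition (Ico 0 1) R i) ≤ ν (⋃ j, B j ∆ R j) := measure_mono hBi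
    _ ≤ ∑' j, ν (B j ∆ R j) := measure_iUnion_le _
    _ ≤ ∑' j, (δ j : ℝ≥0∞) := ENNReal.tsum_le_tsum fun j ↦ by simpa using (hBR j).le
    _ < ε := hδε

lemma lt_measure_of_measure_symmDiff_lt_sub {α : Type*} [MeasurableSpace α] {μ : Measure α}
    {s t : Set α} {a : ℝ≥0∞} (h : μ (s ∆ t) < μ s - a) : a < μ t :=
  calc a < μ s - μ (s ∆ t) := lt_tsub_comm.1 h
    _ ≤ μ t := tsub_le_iff_left.2 (tsub_le_iff_right.1 le_measure_symmDiff)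

theorem random_rational_partition_superfair_positive_probability_general
    (k : ℕ) (μ : Fin k → Measure ℝ) [∀ i, IsProbabilityMeasure (μ i)]
    (B : Fin k → Set ℝ)
    (hmeas : ∀ j, MeasurableSet (B j))
    (hdisj : ∀ j j', j ≠ j' → Disjoint (B j) (B j'))
    (hcover : (⋃ j, B j) = Set.Ico (0 : ℝ) 1)
    (hfair : ∀ i, (k : ℝ≥0∞)⁻¹ < μ i (B i))
    (D : PMF {Q : Fin k → Set ℝ // IsQPartition k Q})
    (hfull : ∀ q, 0 < D q) :
    0 < D.toOuterMeasure {q | ∀ i, (k : ℝ≥0∞)⁻¹ < μ i (q.1 i)} := by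
  set δ := Finset.univ.inf fun i ↦ μ i (B i) - (k : ℝ≥0∞)⁻¹
  have hδ : 0 < δ :=
    (Finset.lt_inf_iff ENNReal.zero_lt_top).2 fun i _ ↦ tsub_pos_of_lt (hfair i)
  obtain ⟨C, hC, hBC⟩ := exists_isQPartition_measure_symmDiff_lt (Measure.sum μ) hmeas
    (fun j j' ↦ hdisj j j') hcover hδ.ne'
  have hCfair : ∀ i, (k : ℝ≥0∞)⁻¹ < μ i (C i) := fun i ↦ by
    refine lt_measure_of_measure_symmDiff_lt_sub (s := B i) ?_
    calc μ i (B i ∆ C i) ≤ Measure.sum μ (B i ∆ C i) := Measure.le_sum μ i _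
      _ < δ := hBC i
      _ ≤ μ i (B i) - (k : ℝ≥0∞)⁻¹ := Finset.inf_le (Finset.mem_univ i)
  calc 0 < D ⟨C, hC⟩ := hfull _
    _ = D.toOuterMeasure {⟨C, hC⟩} := (D.toOuterMeasure_apply_singleton _).symm
    _ ≤ _ := D.toOuterMeasure.mono (singleton_subset_iff.2 (by exact hCfair))

/-- Theorem 5 of the paper: if the non-atomic Borel probability measures
`μ 0, …, μ (k-1)` on `[0,1)` admit a super-fair Borel partition, then any distribution
`D` on the (countable) set `𝒬` of rational-interval partitions whose support is all of
`𝒬` draws, with positive probability, a partition `(C 0, …, C (k-1))` with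
`μ i (C i) > 1/k` for every `i`. -/
theorem random_rational_partition_superfair_positive_probability
    (k : ℕ) (μ : Fin k → Measure ℝ) [∀ i, IsProbabilityMeasure (μ i)]
    (hsupp : ∀ i, μ i (Set.Ico (0 : ℝ) 1)ᶜ = 0)
    (hatom : ∀ i (x : ℝ), μ i {x} = 0)
    (B : Fin k → Set ℝ)
    (hmeas : ∀ j, MeasurableSet (B j))
    (hdisj : ∀ j j', j ≠ j' → Disjoint (B j) (B j'))
    (hcover : (⋃ j, B j) = Set.Ico (0 : ℝ) 1)
    (hfair : ∀ i, (k : ℝ≥0∞)⁻¹ < μ i (B i))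
    (D : PMF {Q : Fin k → Set ℝ // IsQPartition k Q})
    (hfull : ∀ q, 0 < D q) :
    0 < D.toOuterMeasure {q | ∀ i, (k : ℝ≥0∞)⁻¹ < μ i (q.1 i)} :=
  random_rational_partition_superfair_positive_probability_general k μ B hmeas hdisj hcover hfair D
    hfull
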